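/- arXiv:2204.10952 — 4 statements merged into one kernel-verified Lean document; each statement's English description precedes it below -/
import Mathlib

section
/- Under Assumption A (see context), in dimension 1 with unit scale, the function F(t) := ∫_ℝ f(p̃((x−t)²)/p̃(x²)) p̃(x²) dx is differentiable and F′(t) > 0 for every t > 0. -/
/-!
Differentiating under the integral sign and substituting `y = x - t` gives
`F'(t) = ∫ -2 y p̃'(y²) f'(p̃(y²) / p̃((y + t)²)) dy`. Pairing `y` with `-y`, the integrand sums
for `y > 0` to `2 y (-p̃'(y²)) (f'(p̃(y²) / p̃((y + t)²)) - f'(p̃(y²) / p̃((y - t)²)))`, which is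
positive for `t > 0`: `(y - t)² < (y + t)²`, `p̃` decreases and `f'` increases.

The domination hypothesis bounds the derivative only in the shifted variable `y = x - s`, not
uniformly in `x`, so the usual dominated-derivative lemma does not apply. Instead
`F b - F a = ∫_a^b F'` is obtained from Fubini on `[a, b] × ℝ` after the shear `x = y + s`,
and `F'` is continuous by dominated convergence.
-/

open MeasureTheory Set Function

theorem le_biSup_of_continuousOn {φ : ℝ → ℝ} {K : Set ℝ} (hK : IsCompact K)
    (hφ : ContinuousOn φ K) {s : ℝ} (hs : s ∈ K) : φ s ≤ ⨆ t ∈ K, φ t := by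
  refine le_ciSup₂ (f := fun t (_ : t ∈ K) => φ t) ?_ s hs
  refine (hK.image_of_continuousOn hφ).bddAbove.mono ?_
  rintro _ ⟨_, ⟨t, rfl⟩, ⟨ht, rfl⟩⟩
  exact mem_image_of_mem φ ht

theorem integral_pos_of_add_comp_neg_pos {h : ℝ → ℝ} (hh : Integrable h)
    (hpos : ∀ y, 0 < y → 0 < h y + h (-y)) : 0 < ∫ y, h y := by
  have hsymm : ∫ y, h y = ∫ y in Ioi 0, (h y + h (-y)) := by
    rw [← intervalIntegral.integral_Iic_add_Ioi hh.integrableOn hh.integrableOn,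
      integral_add hh.integrableOn hh.comp_neg.integrableOn, add_comm]
    congr 1
    rw [integral_comp_neg_Ioi, neg_zero]
  have hsupp : Ioi 0 ⊆ support fun y => h y + h (-y) := fun y hy => (hpos y hy).ne'
  rw [hsymm, setIntegral_pos_iff_support_of_nonneg_ae
    ((ae_restrict_iff' measurableSet_Ioi).2 (ae_of_all _ fun y hy => (hpos y hy).le))
    (hh.add hh.comp_neg).integrableOn, inter_eq_right.2 hsupp]
  simp

def LocallyUniformlyDominated (q : ℝ → ℝ → ℝ) : Prop :=
  ∀ K, IsCompact K → ∃ B : ℝ → ℝ, Integrable B ∧ ∀ s ∈ K, ∀ y, |q y s| ≤ B y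

namespace LocallyUniformlyDominated

variable {φ q : ℝ → ℝ → ℝ}

theorem integrable (hdom : LocallyUniformlyDominated q) (hq : Continuous (uncurry q)) (t : ℝ) :
    Integrable (q · t) := by
  obtain ⟨B, hB, hqB⟩ := hdom {t} isCompact_singleton
  exact hB.mono' (hq.comp (continuous_id.prodMk continuous_const)).aestronglyMeasurable
    (ae_of_all _ (hqB t rfl))

theorem continuous_integral (hdom : LocallyUniformlyDominated q) (hq : Continuous (uncurry q)) :
    Continuous fun s => ∫ y, q y s := by
  refine continuous_iff_continuousAt.2 fun s₀ => ?_
  obtain ⟨B, hB, hqB⟩ := hdom _ (isCompact_closedBall s₀ 1)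
  refine continuousAt_of_dominated (bound := B)
    (Filter.Eventually.of_forall fun s =>
      (hq.comp (continuous_id.prodMk continuous_const)).aestronglyMeasurable) ?_ hB
    (ae_of_all _ fun y => (hq.comp (continuous_const.prodMk continuous_id)).continuousAt)
  filter_upwards [Metric.closedBall_mem_nhds s₀ one_pos] with s hs
  exact ae_of_all _ (hqB s hs)

theorem integrable_prod_comp_sub (hdom : LocallyUniformlyDominated q)
    (hq : Continuous (uncurry q)) (a b : ℝ) :
    Integrable (uncurry fun s x => q (x - s) s) ((volume.restrict (Ioc a b)).prod volume) := by
  obtain ⟨B, hB, hqB⟩ := hdom _ (isCompact_Icc (a := a) (b := b))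
  have hshear := measurePreserving_prod_add_right (volume.restrict (Ioc a b)) (volume : Measure ℝ)
  have hsheared : (uncurry fun s x => q (x - s) s) ∘ (fun z : ℝ × ℝ => (z.1, z.2 + z.1)) =
      fun z => q z.2 z.1 := by
    ext z; simp
  refine (hshear.integrable_comp ?_).1 ?_
  · exact (hq.comp ((continuous_snd.sub continuous_fst).prodMk continuous_fst)).aestronglyMeasurable
  rw [hsheared]
  refine (hB.comp_snd _).mono' (hq.comp continuous_swap).aestronglyMeasurable ?_
  filter_upwards [Measure.quasiMeasurePreserving_fst.ae (ae_restrict_mem measurableSet_Ioc)]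
    with z hz
  exact hqB z.1 (Ioc_subset_Icc_self hz) z.2

theorem integral_sub_integral_eq (hdom : LocallyUniformlyDominated q)
    (hq : Continuous (uncurry q)) (hφ : ∀ s, Integrable (φ · s))
    (hderiv : ∀ x s, HasDerivAt (φ x) (q (x - s) s) s) {a b : ℝ} (hab : a ≤ b) :
    (∫ x, φ x b) - ∫ x, φ x a = ∫ s in a..b, ∫ y, q y s := by
  have hftc : ∀ x, φ x b - φ x a = ∫ s in a..b, q (x - s) s := fun x =>
    (intervalIntegral.integral_eq_sub_of_hasDerivAt (fun s _ => hderiv x s)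
      ((hq.comp ((continuous_const.sub continuous_id).prodMk continuous_id)).intervalIntegrable
        a b)).symm
  calc (∫ x, φ x b) - ∫ x, φ x a
      = ∫ x, ∫ s in Ioc a b, q (x - s) s := by
        rw [← integral_sub (hφ b) (hφ a)]
        simp_rw [hftc, intervalIntegral.integral_of_le hab]
    _ = ∫ s in Ioc a b, ∫ x, q (x - s) s :=
        (integral_integral_swap (hdom.integrable_prod_comp_sub hq a b)).symm
    _ = ∫ s in a..b, ∫ y, q y s := by
        rw [intervalIntegral.integral_of_le hab]
        congr 1 with s
        exact integral_sub_right_eq_self (q · s) s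

theorem hasDerivAt_integral (hdom : LocallyUniformlyDominated q) (hq : Continuous (uncurry q))
    (hφ : ∀ s, Integrable (φ · s)) (hderiv : ∀ x s, HasDerivAt (φ x) (q (x - s) s) s) (t : ℝ) :
    HasDerivAt (fun s => ∫ x, φ x s) (∫ y, q y t) t := by
  have hF : (fun s => ∫ x, φ x s) = fun s => (∫ x, φ x 0) + ∫ r in (0 : ℝ)..s, ∫ y, q y r := by
    ext s
    rcases le_total 0 s with hs | hs
    · rw [← hdom.integral_sub_integral_eq hq hφ hderiv hs]
      ring
    · rw [intervalIntegral.integral_symm, ← hdom.integral_sub_integral_eq hq hφ hderiv hs]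
      ring
  rw [hF]
  exact ((hdom.continuous_integral hq).integral_hasStrictDerivAt 0 t).hasDerivAt.const_add _

end LocallyUniformlyDominated

section FDivergence

variable {p f : ℝ → ℝ}

noncomputable def fDivergenceDerivIntegrand (p f : ℝ → ℝ) (y t : ℝ) : ℝ :=
  -2 * y * deriv p (y ^ 2) * deriv f (p (y ^ 2) / p ((y + t) ^ 2))

theorem hasDerivAt_fDivergenceIntegrand (hp : Differentiable ℝ p)
    (hpos : ∀ u, 0 ≤ u → 0 < p u) (hf : DifferentiableOn ℝ f (Ioi 0)) (x s : ℝ) :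
    HasDerivAt (fun s => f (p ((x - s) ^ 2) / p (x ^ 2)) * p (x ^ 2))
      (fDivergenceDerivIntegrand p f (x - s) s) s := by
  have hpx : p (x ^ 2) ≠ 0 := (hpos _ (sq_nonneg x)).ne'
  have hratio : 0 < p ((x - s) ^ 2) / p (x ^ 2) :=
    div_pos (hpos _ (sq_nonneg _)) (hpos _ (sq_nonneg x))
  have hsq : HasDerivAt (fun s => (x - s) ^ 2) (-2 * (x - s)) s := by
    simpa [mul_comm] using ((hasDerivAt_id s).const_sub x).fun_pow 2
  have hf' := (hf.differentiableAt (Ioi_mem_nhds hratio)).hasDerivAt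
  refine ((hf'.comp s (((hp _).hasDerivAt.comp s hsq).div_const (p (x ^ 2)))).mul_const
    (p (x ^ 2))).congr_deriv ?_
  simp only [fDivergenceDerivIntegrand, sub_add_cancel]
  field_simp

theorem continuous_deriv_comp_ratio (hp : Continuous p) (hpos : ∀ u, 0 ≤ u → 0 < p u)
    (hf : ContinuousOn (deriv f) (Ioi 0)) :
    Continuous fun z : ℝ × ℝ => deriv f (p (z.1 ^ 2) / p ((z.1 + z.2) ^ 2)) :=
  hf.comp_continuous (by fun_prop (disch := exact fun z => (hpos _ (sq_nonneg _)).ne'))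
    fun z => div_pos (hpos _ (sq_nonneg _)) (hpos _ (sq_nonneg _))

theorem continuous_fDivergenceDerivIntegrand (hp : ContDiff ℝ 1 p)
    (hpos : ∀ u, 0 ≤ u → 0 < p u) (hf : ContinuousOn (deriv f) (Ioi 0)) :
    Continuous (uncurry (fDivergenceDerivIntegrand p f)) :=
  ((continuous_const.mul continuous_fst).mul
    ((hp.continuous_deriv le_rfl).comp (continuous_fst.pow 2))).mul
    (continuous_deriv_comp_ratio hp.continuous hpos hf)

theorem abs_fDivergenceDerivIntegrand_le (hp : Continuous p) (hpos : ∀ u, 0 ≤ u → 0 < p u)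
    (hf : ContinuousOn (deriv f) (Ioi 0)) {K : Set ℝ} (hK : IsCompact K) {s : ℝ} (hs : s ∈ K)
    (y : ℝ) :
    |fDivergenceDerivIntegrand p f y s| ≤
      2 * ⨆ t ∈ K, |deriv f (p (y ^ 2) / p ((y + t) ^ 2))| * |deriv p (y ^ 2)| * |y| := by
  have hcont : Continuous fun t => |deriv f (p (y ^ 2) / p ((y + t) ^ 2))| *
      |deriv p (y ^ 2)| * |y| :=
    ((continuous_deriv_comp_ratio hp hpos hf).comp
      (continuous_const.prodMk continuous_id)).abs.mul continuous_const |>.mul continuous_const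
  calc |fDivergenceDerivIntegrand p f y s|
      = 2 * (|deriv f (p (y ^ 2) / p ((y + s) ^ 2))| * |deriv p (y ^ 2)| * |y|) := by
        simp only [fDivergenceDerivIntegrand, abs_mul, abs_neg, abs_two]
        ring
    _ ≤ _ := by
        gcongr
        exact le_biSup_of_continuousOn hK hcont.continuousOn hs

theorem fDivergenceDerivIntegrand_add_neg_pos (hpos : ∀ u, 0 ≤ u → 0 < p u)
    (hanti : StrictAntiOn p (Ici 0)) (hp' : ∀ u, 0 ≤ u → deriv p u < 0)
    (hf : StrictMonoOn (deriv f) (Ioi 0)) {y t : ℝ} (hy : 0 < y) (ht : 0 < t) :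
    0 < fDivergenceDerivIntegrand p f y t + fDivergenceDerivIntegrand p f (-y) t := by
  have hp_lt : p ((y + t) ^ 2) < p ((-y + t) ^ 2) :=
    hanti (mem_Ici.2 (sq_nonneg _)) (mem_Ici.2 (sq_nonneg _)) (by nlinarith)
  have hratio_lt : p (y ^ 2) / p ((-y + t) ^ 2) < p (y ^ 2) / p ((y + t) ^ 2) :=
    div_lt_div_of_pos_left (hpos _ (sq_nonneg _)) (hpos _ (sq_nonneg _)) hp_lt
  have hf_lt := hf (div_pos (hpos _ (sq_nonneg _)) (hpos _ (sq_nonneg _)))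
    (div_pos (hpos _ (sq_nonneg _)) (hpos _ (sq_nonneg _))) hratio_lt
  have hsum : fDivergenceDerivIntegrand p f y t + fDivergenceDerivIntegrand p f (-y) t =
      2 * y * (-deriv p (y ^ 2)) * (deriv f (p (y ^ 2) / p ((y + t) ^ 2)) -
        deriv f (p (y ^ 2) / p ((-y + t) ^ 2))) := by
    simp only [fDivergenceDerivIntegrand, neg_sq]
    ring
  rw [hsum]
  have := hp' _ (sq_nonneg y)
  exact mul_pos (mul_pos (by positivity) (by linarith)) (by linarith)

end FDivergence

theorem F_differentiable_and_strict_increase_general (ptilde : ℝ → ℝ)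
    (hp_smooth : ContDiff ℝ 1 ptilde)
    (hp_pos : ∀ u : ℝ, 0 ≤ u → 0 < ptilde u)
    (hp_deriv_neg : ∀ u : ℝ, 0 ≤ u → deriv ptilde u < 0)
    (f : ℝ → ℝ) (hf_smooth : ContDiffOn ℝ 2 f (Set.Ioi 0))
    (hf'' : ∀ u : ℝ, 0 < u → 0 < iteratedDeriv 2 f u)
    (hint : ∀ t : ℝ,
      Integrable (fun x : ℝ => f (ptilde ((x - t) ^ 2) / ptilde (x ^ 2)) * ptilde (x ^ 2)))
    (hdom : ∀ K : Set ℝ, IsCompact K →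
      Integrable (fun y : ℝ =>
        ⨆ t ∈ K, |deriv f (ptilde (y ^ 2) / ptilde ((y + t) ^ 2))| *
          |deriv ptilde (y ^ 2)| * |y|)) :
    Differentiable ℝ
        (fun t : ℝ => ∫ x : ℝ, f (ptilde ((x - t) ^ 2) / ptilde (x ^ 2)) * ptilde (x ^ 2)) ∧
      ∀ t : ℝ, 0 < t →
        0 < deriv
          (fun t : ℝ => ∫ x : ℝ, f (ptilde ((x - t) ^ 2) / ptilde (x ^ 2)) * ptilde (x ^ 2))
          t := by
  have hf' : ContinuousOn (deriv f) (Ioi 0) :=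
    hf_smooth.continuousOn_deriv_of_isOpen isOpen_Ioi (by norm_num)
  have hq := continuous_fDivergenceDerivIntegrand hp_smooth hp_pos hf'
  have hq_dom : LocallyUniformlyDominated (fDivergenceDerivIntegrand ptilde f) := fun K hK =>
    ⟨_, (hdom K hK).const_mul 2,
      fun s hs => abs_fDivergenceDerivIntegrand_le hp_smooth.continuous hp_pos hf' hK hs⟩
  have hF := hq_dom.hasDerivAt_integral hq hint
    (hasDerivAt_fDivergenceIntegrand (hp_smooth.differentiable one_ne_zero) hp_pos
      (hf_smooth.differentiableOn (by norm_num)))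
  have hp_anti : StrictAntiOn ptilde (Ici 0) :=
    strictAntiOn_of_deriv_neg (convex_Ici 0) hp_smooth.continuous.continuousOn
      fun u hu => hp_deriv_neg u (interior_subset hu)
  have hf'_mono : StrictMonoOn (deriv f) (Ioi 0) :=
    strictMonoOn_of_deriv_pos (convex_Ioi 0) hf' fun u hu => by
      simpa [iteratedDeriv_succ] using hf'' u (interior_subset hu)
  refine ⟨fun t => (hF t).differentiableAt, fun t ht => ?_⟩
  rw [(hF t).deriv]
  exact integral_pos_of_add_comp_neg_pos (hq_dom.integrable hq t)
    fun y hy => fDivergenceDerivIntegrand_add_neg_pos hp_pos hp_anti hp_deriv_neg hf'_mono hy ht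

theorem F_differentiable_and_strict_increase (ptilde : ℝ → ℝ)
    (hp_smooth : ContDiff ℝ 1 ptilde)
    (hp_pos : ∀ u : ℝ, 0 ≤ u → 0 < ptilde u)
    (hp_deriv_neg : ∀ u : ℝ, 0 ≤ u → deriv ptilde u < 0)
    (hp_prob : ∫ x : ℝ, ptilde (x ^ 2) = 1)
    (f : ℝ → ℝ) (hf_smooth : ContDiffOn ℝ 2 f (Set.Ioi 0))
    (hf1 : f 1 = 0) (hf'' : ∀ u : ℝ, 0 < u → 0 < iteratedDeriv 2 f u)
    (hint : ∀ t : ℝ,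
      Integrable (fun x : ℝ => f (ptilde ((x - t) ^ 2) / ptilde (x ^ 2)) * ptilde (x ^ 2)))
    (hdom : ∀ K : Set ℝ, IsCompact K →
      Integrable (fun y : ℝ =>
        ⨆ t ∈ K, |deriv f (ptilde (y ^ 2) / ptilde ((y + t) ^ 2))| *
          |deriv ptilde (y ^ 2)| * |y|)) :
    Differentiable ℝ
        (fun t : ℝ => ∫ x : ℝ, f (ptilde ((x - t) ^ 2) / ptilde (x ^ 2)) * ptilde (x ^ 2)) ∧
      ∀ t : ℝ, 0 < t →
        0 < deriv
          (fun t : ℝ => ∫ x : ℝ, f (ptilde ((x - t) ^ 2) / ptilde (x ^ 2)) * ptilde (x ^ 2))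
          t :=
  F_differentiable_and_strict_increase_general ptilde hp_smooth hp_pos hp_deriv_neg f hf_smooth hf''
    hint hdom
end

section
/- Let p(x) = p̃(‖x‖²) be a spherically symmetric density on ℝ^d and p_{0,Σ}(x) := det(Σ)^{-1/2} p̃(xᵀΣ⁻¹x). Then for positive-definite Σ₁, Σ₂, the f-divergence I_f(p_{0,Σ₁} : p_{0,Σ₂}) equals ∫_{ℝ^d} f((λ₁⋯λ_d)^{1/2} p̃(λ₁y₁² + ⋯ + λ_d y_d²)/p̃(‖y‖²)) p̃(‖y‖²) dy, where λ₁,…,λ_d are the eigenvalues of Σ₁Σ₂⁻¹; in particular I_f depends only on these eigenvalues. -/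
open MeasureTheory Matrix Polynomial

/-!
Write `S₁ = BᵀB` and diagonalize the symmetric matrix `B S₂⁻¹ Bᵀ`, which has the same
characteristic polynomial as `S₁ S₂⁻¹`, by an orthogonal `V` whose columns are ordered so that
the diagonal is `lam`. Then `M = BᵀV` satisfies `Mᵀ S₁⁻¹ M = 1` and `Mᵀ S₂⁻¹ M = diag lam`,
hence `|det M| = √(det S₁)` and `∏ lam = det S₁ / det S₂`, and the substitution `x = M y`
turns one integral into the other.
-/

/-- Density of the centered scale family generated by the spherical standard density:
`p_{0,Σ}(x) = det(Σ)^{-1/2} p̃(xᵀΣ⁻¹x)`. -/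
noncomputable def scaleDensity (d : ℕ) (ptilde : ℝ → ℝ)
    (S : Matrix (Fin d) (Fin d) ℝ) (x : Fin d → ℝ) : ℝ :=
  (Real.sqrt S.det)⁻¹ * ptilde (x ⬝ᵥ (S⁻¹ *ᵥ x))

theorem Fintype.exists_perm_comp_eq_of_map_univ_eq {ι β : Type*} [Fintype ι] [DecidableEq β]
    {f g : ι → β} (h : Finset.univ.val.map f = Finset.univ.val.map g) :
    ∃ σ : Equiv.Perm ι, g ∘ σ = f := by
  have hfiber (c : β) : Fintype.card {i // f i = c} = Fintype.card {i // g i = c} := by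
    have := congrArg (Multiset.count c) h
    simp only [Multiset.count_map, ← Finset.filter_val, Finset.card_val] at this
    simpa [Fintype.card_subtype, eq_comm] using this
  exact ⟨.ofFiberEquiv fun c => Fintype.equivOfCardEq (hfiber c),
    funext (Equiv.ofFiberEquiv_map _)⟩

theorem Polynomial.roots_prod_univ_X_sub_C {R ι : Type*} [CommRing R] [IsDomain R] [Fintype ι]
    (a : ι → R) : (∏ i, (X - C (a i))).roots = Finset.univ.val.map a := by
  rw [Finset.prod_eq_multiset_prod, ← roots_multiset_prod_X_sub_C (Finset.univ.val.map a),
    Multiset.map_map]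
  rfl

namespace Matrix
variable {n : Type*} [Fintype n]

theorem dotProduct_mulVec_mulVec {R : Type*} [CommSemiring R] (M N : Matrix n n R) (y : n → R) :
    (M *ᵥ y) ⬝ᵥ (N *ᵥ (M *ᵥ y)) = y ⬝ᵥ ((Mᵀ * N * M) *ᵥ y) := by
  rw [dotProduct_mulVec, ← vecMul_transpose, vecMul_vecMul, ← dotProduct_mulVec, mulVec_vecMul,
    transpose_transpose]

variable [DecidableEq n]

theorem dotProduct_diagonal_mulVec {R : Type*} [CommSemiring R] (w v : n → R) :
    v ⬝ᵥ (diagonal w *ᵥ v) = ∑ i, w i * v i ^ 2 := by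
  simp only [dotProduct, mulVec_diagonal]
  exact Finset.sum_congr rfl fun i _ => by ring

theorem IsHermitian.exists_orthogonal_conj_eq_diagonal {A : Matrix n n ℝ} (hA : A.IsHermitian)
    {lam : n → ℝ} (hlam : A.charpoly = ∏ i, (X - C (lam i))) :
    ∃ V : Matrix n n ℝ, Vᵀ * V = 1 ∧ Vᵀ * A * V = diagonal lam := by
  obtain ⟨σ, hσ⟩ : ∃ σ : Equiv.Perm n, hA.eigenvalues ∘ σ = lam := by
    apply Fintype.exists_perm_comp_eq_of_map_univ_eq
    simpa [hlam, Polynomial.roots_prod_univ_X_sub_C] using hA.roots_charpoly_eq_eigenvalues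
  let U : Matrix n n ℝ := hA.eigenvectorUnitary
  have hUT : star U = Uᵀ := conjTranspose_eq_transpose_of_trivial U
  have hUU : Uᵀ * U = 1 := hUT ▸ Unitary.coe_star_mul_self hA.eigenvectorUnitary
  have hUAU : Uᵀ * A * U = diagonal hA.eigenvalues := by
    have h := hA.conjStarAlgAut_star_eigenvectorUnitary
    simp only [Unitary.conjStarAlgAut_apply, Unitary.coe_star, star_star] at h
    rw [← hUT]
    simpa using h
  refine ⟨U.submatrix id σ, ?_, ?_⟩
  · rw [transpose_submatrix, ← submatrix_mul _ _ _ _ _ Function.bijective_id, hUU,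
      submatrix_one_equiv]
  · calc (U.submatrix id σ)ᵀ * A * U.submatrix id σ = (Uᵀ * A * U).submatrix σ σ := by
          rw [submatrix_mul _ _ _ id _ Function.bijective_id,
            submatrix_mul _ _ _ id _ Function.bijective_id, submatrix_id_id, transpose_submatrix]
      _ = diagonal lam := by rw [hUAU, submatrix_diagonal_equiv, hσ]

open scoped MatrixOrder in
theorem PosDef.exists_transpose_mul_self_eq {S : Matrix n n ℝ} (hS : S.PosDef) :
    ∃ B : Matrix n n ℝ, Bᵀ * B = S := by
  refine ⟨CFC.sqrt S, ?_⟩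
  rw [← conjTranspose_eq_transpose_of_trivial, (CFC.sqrt_nonneg S).posSemidef.isHermitian.eq,
    CFC.sqrt_mul_sqrt_self S hS.posSemidef.nonneg]

theorem PosDef.exists_transpose_mul_inv_mul_eq_one_and_diagonal {S Q : Matrix n n ℝ}
    (hS : S.PosDef) (hQ : Q.IsHermitian) {lam : n → ℝ}
    (hlam : (S * Q).charpoly = ∏ i, (X - C (lam i))) :
    ∃ M : Matrix n n ℝ, Mᵀ * S⁻¹ * M = 1 ∧ Mᵀ * Q * M = diagonal lam := by
  obtain ⟨B, rfl⟩ := hS.exists_transpose_mul_self_eq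
  have hB : IsUnit B.det := by
    have := (isUnit_iff_isUnit_det _).mp hS.isUnit
    rw [det_mul] at this
    exact isUnit_of_mul_isUnit_right this
  have hBQB : (B * Q * Bᵀ).IsHermitian := by
    simpa only [conjTranspose_eq_transpose_of_trivial] using isHermitian_mul_mul_conjTranspose B hQ
  obtain ⟨V, hVV, hVD⟩ := hBQB.exists_orthogonal_conj_eq_diagonal
    (by rwa [charpoly_mul_comm, ← mul_assoc])
  refine ⟨Bᵀ * V, ?_, by simpa only [transpose_mul, transpose_transpose, mul_assoc] using hVD⟩
  calc (Bᵀ * V)ᵀ * (Bᵀ * B)⁻¹ * (Bᵀ * V) = Vᵀ * ((B * B⁻¹) * (Bᵀ⁻¹ * Bᵀ)) * V := by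
        simp only [transpose_mul, transpose_transpose, mul_inv_rev, mul_assoc]
    _ = 1 := by
        rw [mul_nonsing_inv _ hB, nonsing_inv_mul _ (by rwa [det_transpose]), one_mul, mul_one,
          hVV]

theorem det_sq_eq_of_transpose_mul_inv_mul_eq_one {K : Type*} [Field K] {S M : Matrix n n K}
    (hS : S.det ≠ 0)
    (hM : Mᵀ * S⁻¹ * M = 1) : M.det ^ 2 = S.det := by
  have h := congrArg det hM
  rw [det_mul, det_mul, det_transpose, det_nonsing_inv, Ring.inverse_eq_inv', det_one] at h
  field_simp [hS] at h
  linear_combination h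

end Matrix

theorem MeasureTheory.integral_eq_abs_det_smul_integral_comp_mulVec {ι E : Type*} [Fintype ι]
    [DecidableEq ι] [NormedAddCommGroup E] [NormedSpace ℝ E] (g : (ι → ℝ) → E)
    {M : Matrix ι ι ℝ} (hM : M.det ≠ 0) :
    ∫ x, g x = |M.det| • ∫ y, g (M *ᵥ y) := by
  have hemb : MeasurableEmbedding (toLin' M) :=
    (M.toLinearEquiv' (invertibleOfIsUnitDet M hM.isUnit)).toContinuousLinearEquiv.toHomeomorph.measurableEmbedding
  simp_rw [← toLin'_apply M]
  rw [← hemb.integral_map, Real.map_matrix_volume_pi_eq_smul_volume_pi hM,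
    integral_smul_measure, ENNReal.toReal_ofReal (abs_nonneg _), smul_smul, abs_inv,
    mul_inv_cancel₀ (abs_ne_zero.mpr hM), one_smul]

theorem scaleDensity_mulVec (d : ℕ) (ptilde : ℝ → ℝ) (S M : Matrix (Fin d) (Fin d) ℝ)
    (y : Fin d → ℝ) :
    scaleDensity d ptilde S (M *ᵥ y) =
      (Real.sqrt S.det)⁻¹ * ptilde (y ⬝ᵥ ((Mᵀ * S⁻¹ * M) *ᵥ y)) := by
  rw [scaleDensity, dotProduct_mulVec_mulVec]

theorem fDiv_scale_family_spectral_general (d : ℕ) (ptilde : ℝ → ℝ) (f : ℝ → ℝ)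
    (S₁ S₂ : Matrix (Fin d) (Fin d) ℝ) (hS₁ : S₁.PosDef) (hS₂ : S₂.PosDef)
    (lam : Fin d → ℝ)
    (hlam : (S₁ * S₂⁻¹).charpoly = ∏ i, (X - C (lam i))) :
    ∫ x : Fin d → ℝ,
        scaleDensity d ptilde S₁ x *
          f (scaleDensity d ptilde S₂ x / scaleDensity d ptilde S₁ x) =
      ∫ y : Fin d → ℝ,
        f (Real.sqrt (∏ i, lam i) * ptilde (∑ i, lam i * y i ^ 2) / ptilde (∑ i, y i ^ 2)) *
          ptilde (∑ i, y i ^ 2) := by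
  obtain ⟨M, hM₁, hM₂⟩ :=
    hS₁.exists_transpose_mul_inv_mul_eq_one_and_diagonal hS₂.inv.isHermitian hlam
  have hdetM : M.det ^ 2 = S₁.det := det_sq_eq_of_transpose_mul_inv_mul_eq_one hS₁.det_pos.ne' hM₁
  have hprod : ∏ i, lam i = S₁.det / S₂.det := by
    rw [← det_diagonal, ← hM₂, det_mul, det_mul, det_transpose, det_nonsing_inv,
      Ring.inverse_eq_inv', ← hdetM]
    ring
  have habs : |M.det| = Real.sqrt S₁.det := by rw [← hdetM, Real.sqrt_sq_eq_abs]
  have hs₁ : Real.sqrt S₁.det ≠ 0 := (Real.sqrt_pos.mpr hS₁.det_pos).ne'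
  have hM : M.det ≠ 0 := by rw [← abs_ne_zero, habs]; exact hs₁
  rw [integral_eq_abs_det_smul_integral_comp_mulVec _ hM, habs,
    smul_eq_mul, ← integral_const_mul]
  congr 1 with y
  rw [scaleDensity_mulVec, scaleDensity_mulVec, hM₁, hM₂, ← diagonal_one,
    dotProduct_diagonal_mulVec, dotProduct_diagonal_mulVec, hprod, Real.sqrt_div' _ hS₂.det_pos.le]
  field_simp

theorem fDiv_scale_family_spectral (d : ℕ) (ptilde : ℝ → ℝ)
    (hp_meas : Measurable ptilde) (hp_pos : ∀ u : ℝ, 0 ≤ u → 0 < ptilde u)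
    (hp_prob : ∫ x : Fin d → ℝ, ptilde (x ⬝ᵥ x) = 1)
    (f : ℝ → ℝ) (hf_meas : Measurable f)
    (S₁ S₂ : Matrix (Fin d) (Fin d) ℝ) (hS₁ : S₁.PosDef) (hS₂ : S₂.PosDef)
    (lam : Fin d → ℝ)
    (hlam : (S₁ * S₂⁻¹).charpoly = ∏ i, (X - C (lam i)))
    (hint : Integrable (fun x : Fin d → ℝ =>
      scaleDensity d ptilde S₁ x * f (scaleDensity d ptilde S₂ x / scaleDensity d ptilde S₁ x))) :
    ∫ x : Fin d → ℝ,
        scaleDensity d ptilde S₁ x *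
          f (scaleDensity d ptilde S₂ x / scaleDensity d ptilde S₁ x) =
      ∫ y : Fin d → ℝ,
        f (Real.sqrt (∏ i, lam i) * ptilde (∑ i, lam i * y i ^ 2) / ptilde (∑ i, y i ^ 2)) *
          ptilde (∑ i, y i ^ 2) :=
  fDiv_scale_family_spectral_general d ptilde f S₁ S₂ hS₁ hS₂ lam hlam
end

section
/- For fixed t ∈ ℝ and x₂, x₃ ∈ ℝ, ∫_ℝ (1+x₁²+x₂²+x₃²)² / (1+(x₁−t)²+x₂²+x₃²)⁴ dx₁ = (π/(16 c^{3/2})) (8 + 16t²/c + 5t⁴/c²), where c = 1 + x₂² + x₃². -/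
/-!
After the substitution `x = u + t` the integrand becomes `(c + (u + t)²)² / (c + u²)⁴`, whose even
part is `(c + u²)⁻² + 6t² (c + u²)⁻³ + (t⁴ - 4ct²) (c + u²)⁻⁴`; averaging over `u ↦ -u` removes the
odd part. The integrals `Iₙ = ∫ (c + u²)⁻ⁿ` follow from `I₁ = π / √c` and the recurrence
`2nc Iₙ₊₁ = (2n - 1) Iₙ`, obtained by integrating the derivative of `u / (c + u²)ⁿ` over `ℝ`.
-/

open MeasureTheory Real Filter Topology

lemma integral_add_comp_neg {G E : Type*} [MeasurableSpace G] [AddGroup G] [MeasurableNeg G]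
    [NormedAddCommGroup E] [NormedSpace ℝ E] {μ : Measure G} [μ.IsNegInvariant] {f : G → E}
    (hf : Integrable f μ) : ∫ x, (f x + f (-x)) ∂μ = (2 : ℝ) • ∫ x, f x ∂μ := by
  rw [integral_add hf hf.comp_neg, integral_neg_eq_self, two_smul]

lemma integrable_of_nonneg_of_integrable_add_comp_neg {f : ℝ → ℝ} (hf : AEStronglyMeasurable f)
    (hf₀ : 0 ≤ f) (h : Integrable fun x => f x + f (-x)) : Integrable f :=
  h.mono' hf <| ae_of_all _ fun x => by
    rw [norm_of_nonneg (hf₀ x)]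
    exact le_add_of_nonneg_right (hf₀ (-x))

section InvAddSqPow

variable {c : ℝ}

private lemma inv_add_sq_eq_inv_mul_inv_one_add_sq (hc : 0 < c) (x : ℝ) :
    (c + x ^ 2)⁻¹ = c⁻¹ * (1 + (x / √c) ^ 2)⁻¹ := by
  rw [div_pow, sq_sqrt hc.le]
  field_simp

lemma integrable_inv_add_sq (hc : 0 < c) : Integrable fun x : ℝ => (c + x ^ 2)⁻¹ := by
  simp_rw [inv_add_sq_eq_inv_mul_inv_one_add_sq hc]
  exact (integrable_inv_one_add_sq.comp_div (sqrt_pos.2 hc).ne').const_mul _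

lemma integral_inv_add_sq (hc : 0 < c) : ∫ x : ℝ, (c + x ^ 2)⁻¹ = π / √c := by
  simp_rw [inv_add_sq_eq_inv_mul_inv_one_add_sq hc, integral_const_mul,
    Measure.integral_comp_div (fun x : ℝ => (1 + x ^ 2)⁻¹), integral_univ_inv_one_add_sq,
    abs_of_pos (sqrt_pos.2 hc), smul_eq_mul]
  field_simp
  exact sq_sqrt hc.le

lemma integrable_inv_add_sq_pow_succ (hc : 0 < c) (n : ℕ) :
    Integrable fun x : ℝ => ((c + x ^ 2) ^ (n + 1))⁻¹ := by
  refine ((integrable_inv_add_sq hc).const_mul (c ^ n)⁻¹).mono' (by fun_prop)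
    (ae_of_all _ fun x => ?_)
  have hw : c ≤ c + x ^ 2 := le_add_of_nonneg_right (sq_nonneg x)
  rw [norm_inv, norm_pow, norm_of_nonneg (hc.le.trans hw), pow_succ, mul_inv]
  gcongr

lemma tendsto_mul_inv_add_sq_pow_succ_cocompact (hc : 0 ≤ c) (n : ℕ) :
    Tendsto (fun x : ℝ => x * ((c + x ^ 2) ^ (n + 1))⁻¹) (cocompact ℝ) (𝓝 0) := by
  refine squeeze_zero_norm' (a := fun x => ‖x‖⁻¹) ?_
    tendsto_norm_cocompact_atTop.inv_tendsto_atTop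
  filter_upwards [tendsto_norm_cocompact_atTop.eventually_ge_atTop 1] with x hx
  simp only [norm_mul, norm_inv, norm_pow, norm_eq_abs] at hx ⊢
  have hx2 : x ^ 2 ≤ c + x ^ 2 := le_add_of_nonneg_left hc
  have hw : 1 ≤ c + x ^ 2 := by nlinarith [sq_abs x]
  rw [abs_of_nonneg (by positivity : 0 ≤ c + x ^ 2), ← div_eq_mul_inv,
    div_le_iff₀ (by positivity)]
  calc |x| = |x|⁻¹ * x ^ 2 := by rw [← sq_abs]; field_simp
    _ ≤ |x|⁻¹ * (c + x ^ 2) ^ (n + 1) := by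
      gcongr
      exact hx2.trans (le_self_pow₀ hw (by omega))

lemma hasDerivAt_mul_inv_add_sq_pow_succ (hc : 0 < c) (n : ℕ) (x : ℝ) :
    HasDerivAt (fun x : ℝ => x * ((c + x ^ 2) ^ (n + 1))⁻¹)
      (2 * (n + 1) * c * ((c + x ^ 2) ^ (n + 2))⁻¹ - (2 * n + 1) * ((c + x ^ 2) ^ (n + 1))⁻¹)
      x := by
  have hw : 0 < c + x ^ 2 := by positivity
  refine ((hasDerivAt_id' x).fun_mul ((((hasDerivAt_pow 2 x).const_add c).fun_pow
    (n + 1)).fun_inv (pow_ne_zero _ hw.ne'))).congr_deriv ?_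
  simp only [Nat.add_sub_cancel, Nat.cast_ofNat]
  field_simp
  push_cast
  ring

lemma integral_inv_add_sq_pow_succ_succ (hc : 0 < c) (n : ℕ) :
    ∫ x : ℝ, ((c + x ^ 2) ^ (n + 2))⁻¹ =
      (2 * n + 1) / (2 * (n + 1) * c) * ∫ x : ℝ, ((c + x ^ 2) ^ (n + 1))⁻¹ := by
  have hn₂ := (integrable_inv_add_sq_pow_succ hc (n + 1)).const_mul (2 * (n + 1) * c)
  have hn₁ := (integrable_inv_add_sq_pow_succ hc n).const_mul (2 * n + 1)
  have h := integral_of_hasDerivAt_of_tendsto (hasDerivAt_mul_inv_add_sq_pow_succ hc n)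
    (hn₂.sub hn₁)
    ((tendsto_mul_inv_add_sq_pow_succ_cocompact hc.le n).mono_left atBot_le_cocompact)
    ((tendsto_mul_inv_add_sq_pow_succ_cocompact hc.le n).mono_left atTop_le_cocompact)
  rw [integral_sub hn₂ hn₁, integral_const_mul, integral_const_mul, sub_self, sub_eq_zero] at h
  rw [div_mul_eq_mul_div, eq_div_iff (by positivity), ← h]
  ring

lemma integral_inv_add_sq_pow_succ (hc : 0 < c) (n : ℕ) :
    ∫ x : ℝ, ((c + x ^ 2) ^ (n + 1))⁻¹ = π / √c * n.centralBinom / (4 * c) ^ n := by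
  induction n with
  | zero => simpa using integral_inv_add_sq hc
  | succ n ih =>
    rw [integral_inv_add_sq_pow_succ_succ hc, ih]
    have h : ((n + 1 : ℕ) : ℝ) * (n + 1).centralBinom = 2 * (2 * n + 1) * n.centralBinom := by
      exact_mod_cast Nat.succ_mul_centralBinom_succ n
    push_cast at h ⊢
    field_simp
    linear_combination (-2 * c * (c * 4) ^ n) * h

end InvAddSqPow

lemma integral_add_sq_sq_div_add_sub_sq_pow_four {c : ℝ} (hc : 0 < c) (t : ℝ) :
    ∫ x : ℝ, (c + x ^ 2) ^ 2 / (c + (x - t) ^ 2) ^ 4 =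
      π / √c * (1 / (2 * c) + t ^ 2 / c ^ 2 + 5 * t ^ 4 / (16 * c ^ 3)) := by
  set f : ℝ → ℝ := fun u => (c + (u + t) ^ 2) ^ 2 / (c + u ^ 2) ^ 4
  have hshift : ∫ x : ℝ, (c + x ^ 2) ^ 2 / (c + (x - t) ^ 2) ^ 4 = ∫ u, f u := by
    simpa only [f, sub_add_cancel] using integral_sub_right_eq_self f t
  have heven : ∀ u, f u + f (-u) = 2 * (((c + u ^ 2) ^ 2)⁻¹ + 6 * t ^ 2 * ((c + u ^ 2) ^ 3)⁻¹
      + (t ^ 4 - 4 * c * t ^ 2) * ((c + u ^ 2) ^ 4)⁻¹) := by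
    intro u
    have : 0 < c + u ^ 2 := by positivity
    simp only [f]
    field_simp
    ring
  have h₂ : Integrable fun x : ℝ => ((c + x ^ 2) ^ 2)⁻¹ := integrable_inv_add_sq_pow_succ hc 1
  have h₃ : Integrable fun x : ℝ => 6 * t ^ 2 * ((c + x ^ 2) ^ 3)⁻¹ :=
    (integrable_inv_add_sq_pow_succ hc 2).const_mul _
  have h₄ : Integrable fun x : ℝ => (t ^ 4 - 4 * c * t ^ 2) * ((c + x ^ 2) ^ 4)⁻¹ :=
    (integrable_inv_add_sq_pow_succ hc 3).const_mul _
  have hf : Integrable f := by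
    refine integrable_of_nonneg_of_integrable_add_comp_neg (by fun_prop)
      (fun u => by positivity) ?_
    simp_rw [heven]
    exact ((h₂.fun_add h₃).fun_add h₄).const_mul 2
  have I₂ : ∫ x : ℝ, ((c + x ^ 2) ^ 2)⁻¹ = π / √c * 2 / (4 * c) := by
    simpa [Nat.centralBinom, Nat.choose] using integral_inv_add_sq_pow_succ hc 1
  have I₃ : ∫ x : ℝ, ((c + x ^ 2) ^ 3)⁻¹ = π / √c * 6 / (4 * c) ^ 2 := by
    simpa [Nat.centralBinom, Nat.choose] using integral_inv_add_sq_pow_succ hc 2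
  have I₄ : ∫ x : ℝ, ((c + x ^ 2) ^ 4)⁻¹ = π / √c * 20 / (4 * c) ^ 3 := by
    simpa [Nat.centralBinom, Nat.choose] using integral_inv_add_sq_pow_succ hc 3
  calc ∫ x : ℝ, (c + x ^ 2) ^ 2 / (c + (x - t) ^ 2) ^ 4
      = (∫ u, (f u + f (-u))) / 2 := by
        rw [hshift, integral_add_comp_neg hf, smul_eq_mul]
        ring
    _ = ∫ u : ℝ, ((c + u ^ 2) ^ 2)⁻¹ + 6 * t ^ 2 * ((c + u ^ 2) ^ 3)⁻¹
          + (t ^ 4 - 4 * c * t ^ 2) * ((c + u ^ 2) ^ 4)⁻¹ := by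
      simp_rw [heven]
      rw [integral_const_mul]
      ring
    _ = π / √c * (1 / (2 * c) + t ^ 2 / c ^ 2 + 5 * t ^ 4 / (16 * c ^ 3)) := by
      rw [integral_add (h₂.fun_add h₃) h₄, integral_add h₂ h₃, integral_const_mul,
        integral_const_mul, I₂, I₃, I₄]
      field_simp
      ring

theorem cauchy_inner_integral (t x₂ x₃ : ℝ) :
    ∫ x₁ : ℝ,
        (1 + x₁ ^ 2 + x₂ ^ 2 + x₃ ^ 2) ^ 2 /
          (1 + (x₁ - t) ^ 2 + x₂ ^ 2 + x₃ ^ 2) ^ 4 =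
      Real.pi / (16 * (1 + x₂ ^ 2 + x₃ ^ 2) ^ ((3 : ℝ) / 2)) *
        (8 + 16 * t ^ 2 / (1 + x₂ ^ 2 + x₃ ^ 2) +
          5 * t ^ 4 / (1 + x₂ ^ 2 + x₃ ^ 2) ^ 2) := by
  set c := 1 + x₂ ^ 2 + x₃ ^ 2
  have hc : 0 < c := by positivity
  have hc32 : c ^ ((3 : ℝ) / 2) = c * √c := by
    rw [show (3 : ℝ) / 2 = 1 + 1 / 2 by norm_num, rpow_add hc, rpow_one, sqrt_eq_rpow]
  calc ∫ x₁ : ℝ, (1 + x₁ ^ 2 + x₂ ^ 2 + x₃ ^ 2) ^ 2 / (1 + (x₁ - t) ^ 2 + x₂ ^ 2 + x₃ ^ 2) ^ 4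
      = ∫ x : ℝ, (c + x ^ 2) ^ 2 / (c + (x - t) ^ 2) ^ 4 := by
        congr 1 with x
        ring
    _ = _ := by
      rw [integral_add_sq_sq_div_add_sub_sq_pow_four hc t, hc32]
      have hsqrt : 0 < √c := sqrt_pos.2 hc
      field_simp
      ring
end

section
/- The χ²-divergence between two univariate Cauchy densities with common scale s > 0 and locations l₁, l₂ equals (l₂−l₁)²/(2s²). -/
/-! With `d = l₂ - l₁` and `u = x - l₂`, the integrand `(q - p)² / p` is
`p - q + (s / π) (2 d u + d²) / (s² + u²)²`. The densities both integrate to one, the odd term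
`u / (s² + u²)²` integrates to zero, and `∫ (s² + u²)⁻² du = π / (2 s³)` via the antiderivative
`(u / (s² + u²) + arctan (u / s) / s) / (2 s²)`; what remains is `d² / (2 s²)`. -/

open MeasureTheory Real

/-- The Cauchy density with location `l` and scale `s`. -/
noncomputable def cauchyPDF (l s x : ℝ) : ℝ := s / (Real.pi * (s ^ 2 + (x - l) ^ 2))

open Filter Topology

lemma cauchyPDF_eq_cauchyPDFReal (l : ℝ) {s : ℝ} (hs : 0 ≤ s) :
    cauchyPDF l s = ProbabilityTheory.cauchyPDFReal l s.toNNReal := by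
  ext x
  rw [ProbabilityTheory.cauchyPDFReal_def, Real.coe_toNNReal _ hs, cauchyPDF, div_eq_mul_inv,
    mul_inv, add_comm]
  ring

lemma integrable_cauchyPDF (l : ℝ) {s : ℝ} (hs : 0 ≤ s) : Integrable (cauchyPDF l s) := by
  rw [cauchyPDF_eq_cauchyPDFReal l hs]
  exact ProbabilityTheory.integrable_cauchyPDFReal l

lemma integral_cauchyPDF (l : ℝ) {s : ℝ} (hs : 0 < s) : ∫ x, cauchyPDF l s x = 1 := by
  rw [cauchyPDF_eq_cauchyPDFReal l hs.le]
  exact ProbabilityTheory.integral_cauchyPDFReal_eq_one l (by simpa using hs)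

section SquaredCauchyKernel

variable {s : ℝ}

lemma integrable_inv_sq_add_sq (hs : s ≠ 0) : Integrable fun x : ℝ => (s ^ 2 + x ^ 2)⁻¹ := by
  refine ((integrable_inv_one_add_sq.comp_div hs).const_mul (s ^ 2)⁻¹).congr
    (ae_of_all _ fun x => ?_)
  simp only
  field_simp

lemma integrable_inv_sq_add_sq_sq (hs : s ≠ 0) :
    Integrable fun x : ℝ => ((s ^ 2 + x ^ 2) ^ 2)⁻¹ := by
  refine ((integrable_inv_sq_add_sq hs).const_mul (s ^ 2)⁻¹).mono' (by fun_prop)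
    (ae_of_all _ fun x => ?_)
  have hs2 : 0 < s ^ 2 := by positivity
  rw [norm_inv, norm_pow, Real.norm_of_nonneg (by positivity), ← mul_inv, sq]
  gcongr
  nlinarith [sq_nonneg x]

lemma integrable_mul_inv_sq_add_sq_sq (hs : s ≠ 0) :
    Integrable fun x : ℝ => x * ((s ^ 2 + x ^ 2) ^ 2)⁻¹ := by
  refine ((integrable_inv_sq_add_sq hs).const_mul (2 * |s|)⁻¹).mono' (by fun_prop)
    (ae_of_all _ fun x => ?_)
  have hs' : 0 < |s| := abs_pos.2 hs
  have hd : 0 < s ^ 2 + x ^ 2 := by positivity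
  have hamgm : 2 * |s| * |x| ≤ s ^ 2 + x ^ 2 := by
    nlinarith [sq_nonneg (|s| - |x|), sq_abs s, sq_abs x]
  rw [norm_mul, norm_inv, norm_pow, Real.norm_of_nonneg hd.le, Real.norm_eq_abs,
    ← div_eq_mul_inv, div_le_iff₀ (by positivity)]
  calc |x| = (2 * |s|)⁻¹ * (2 * |s| * |x|) := by field_simp
    _ ≤ (2 * |s|)⁻¹ * (s ^ 2 + x ^ 2) := by gcongr
    _ = (2 * |s|)⁻¹ * (s ^ 2 + x ^ 2)⁻¹ * (s ^ 2 + x ^ 2) ^ 2 := by field_simp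

lemma integral_mul_inv_sq_add_sq_sq (s : ℝ) : ∫ x : ℝ, x * ((s ^ 2 + x ^ 2) ^ 2)⁻¹ = 0 := by
  have h := integral_neg_eq_self (fun x : ℝ => x * ((s ^ 2 + x ^ 2) ^ 2)⁻¹) volume
  simp only [neg_mul, neg_sq, integral_neg] at h
  linarith

lemma tendsto_div_sq_add_sq_cocompact (s : ℝ) :
    Tendsto (fun x : ℝ => x / (s ^ 2 + x ^ 2)) (cocompact ℝ) (𝓝 0) := by
  refine squeeze_zero_norm' ?_ (tendsto_inv_atTop_zero.comp tendsto_norm_cocompact_atTop)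
  filter_upwards [tendsto_norm_cocompact_atTop.eventually_gt_atTop 0] with x hx
  rw [Real.norm_eq_abs] at hx
  have hd : 0 < s ^ 2 + x ^ 2 := by nlinarith [sq_abs x, sq_nonneg s, mul_pos hx hx]
  rw [norm_div, Function.comp_apply, Real.norm_of_nonneg hd.le, Real.norm_eq_abs,
    div_le_iff₀ hd]
  calc |x| = |x|⁻¹ * x ^ 2 := by rw [← sq_abs]; field_simp
    _ ≤ |x|⁻¹ * (s ^ 2 + x ^ 2) := by gcongr; nlinarith

lemma hasDerivAt_antideriv_inv_sq_add_sq_sq (hs : s ≠ 0) (x : ℝ) :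
    HasDerivAt (fun x => (x / (s ^ 2 + x ^ 2) + arctan (x / s) / s) / (2 * s ^ 2))
      ((s ^ 2 + x ^ 2) ^ 2)⁻¹ x := by
  have hd : s ^ 2 + x ^ 2 ≠ 0 := by positivity
  have hq : HasDerivAt (fun x => s ^ 2 + x ^ 2) (2 * x) x := by
    simpa using ((hasDerivAt_id x).pow 2).const_add (s ^ 2)
  have := ((((hasDerivAt_id x).div hq hd).add
    (((hasDerivAt_id x).div_const s).arctan.div_const s)).div_const (2 * s ^ 2))
  refine this.congr_deriv ?_
  simp only [id]
  field_simp
  ring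

lemma integral_inv_sq_add_sq_sq (hs : 0 < s) :
    ∫ x : ℝ, ((s ^ 2 + x ^ 2) ^ 2)⁻¹ = π / (2 * s ^ 3) := by
  have hlim := tendsto_div_sq_add_sq_cocompact s
  have htop : Tendsto (fun x => (x / (s ^ 2 + x ^ 2) + arctan (x / s) / s) / (2 * s ^ 2)) atTop
      (𝓝 ((0 + π / 2 / s) / (2 * s ^ 2))) :=
    ((hlim.mono_left atTop_le_cocompact).add
      (((tendsto_arctan_atTop.mono_right nhdsWithin_le_nhds).comp
        (tendsto_id.atTop_div_const hs)).div_const s)).div_const _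
  have hbot : Tendsto (fun x => (x / (s ^ 2 + x ^ 2) + arctan (x / s) / s) / (2 * s ^ 2)) atBot
      (𝓝 ((0 + -(π / 2) / s) / (2 * s ^ 2))) :=
    ((hlim.mono_left atBot_le_cocompact).add
      (((tendsto_arctan_atBot.mono_right nhdsWithin_le_nhds).comp
        (tendsto_id.atBot_div_const hs)).div_const s)).div_const _
  rw [integral_of_hasDerivAt_of_tendsto (hasDerivAt_antideriv_inv_sq_add_sq_sq hs.ne')
    (integrable_inv_sq_add_sq_sq hs.ne') hbot htop]
  field_simp
  ring

end SquaredCauchyKernel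

lemma chiSq_integrand_cauchyPDF_eq (l₁ l₂ : ℝ) {s : ℝ} (hs : s ≠ 0) (x : ℝ) :
    (cauchyPDF l₂ s x - cauchyPDF l₁ s x) ^ 2 / cauchyPDF l₁ s x =
      cauchyPDF l₁ s x - cauchyPDF l₂ s x +
        s / π * (2 * (l₂ - l₁) * ((x - l₂) * ((s ^ 2 + (x - l₂) ^ 2) ^ 2)⁻¹) +
          (l₂ - l₁) ^ 2 * ((s ^ 2 + (x - l₂) ^ 2) ^ 2)⁻¹) := by
  have h₁ : s ^ 2 + (x - l₁) ^ 2 ≠ 0 := by positivity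
  have h₂ : s ^ 2 + (x - l₂) ^ 2 ≠ 0 := by positivity
  simp only [cauchyPDF]
  field_simp
  ring

theorem chiSq_cauchy_same_scale (s : ℝ) (hs : 0 < s) (l₁ l₂ : ℝ) :
    (∫ x : ℝ, (cauchyPDF l₂ s x - cauchyPDF l₁ s x) ^ 2 / cauchyPDF l₁ s x) =
      (l₂ - l₁) ^ 2 / (2 * s ^ 2) := by
  have hodd := (integrable_mul_inv_sq_add_sq_sq hs.ne').comp_sub_right l₂
  have heven := (integrable_inv_sq_add_sq_sq hs.ne').comp_sub_right l₂
  simp_rw [chiSq_integrand_cauchyPDF_eq l₁ l₂ hs.ne']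
  have hp : Integrable fun x => cauchyPDF l₁ s x := integrable_cauchyPDF l₁ hs.le
  have hq : Integrable fun x => cauchyPDF l₂ s x := integrable_cauchyPDF l₂ hs.le
  rw [integral_add (by fun_prop) (by fun_prop), integral_sub hp hq, integral_const_mul,
    integral_add (by fun_prop) (by fun_prop), integral_const_mul, integral_const_mul,
    integral_sub_right_eq_self (fun x => x * ((s ^ 2 + x ^ 2) ^ 2)⁻¹),
    integral_sub_right_eq_self (fun x => ((s ^ 2 + x ^ 2) ^ 2)⁻¹),
    integral_cauchyPDF l₁ hs, integral_cauchyPDF l₂ hs, integral_mul_inv_sq_add_sq_sq,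
    integral_inv_sq_add_sq_sq hs]
  field_simp
  ring
end
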